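/- Let P be a finite set of points in ℝ^d, ω : P → [0,∞) a weight assignment, and p ∈ P a point whose weighted Voronoi cell Vor_ω(p) is bounded. If every d-simplex of Del_ω(P) containing p is δ²-power protected for some δ > 0, then no simplex of Del_ω(P) containing p is degenerate, i.e., every σ ∈ Del_ω(P) with p ∈ σ has affinely independent vertices. -/

import Mathlib

/-!
Let `c` be an extreme point of the Voronoi face of `σ`, which is compact because it lies in the
bounded cell of `p`, and let `τ ⊇ σ` be the set of sites whose cells contain `c`. The points of `τ`
affinely span the space: moving `c` orthogonally to their span keeps all sites of `τ` tied, and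
for small moves keeps all other sites farther, so `c` would be interior to a segment of the face.
Hence `τ` contains a full-dimensional simplex `t ∋ p`. Since `t` spans, `c` is the only point
power-equidistant from the vertices of `t`, so `t` is protected at `c`, which forbids any further
site of `τ`. Thus `σ ⊆ τ = t` is affinely independent.
-/

noncomputable section

/-- Weighted Voronoi cell of `p` among the points of `P`. -/
def vorCell {d : ℕ} (P : Finset (EuclideanSpace ℝ (Fin d))) (ω : EuclideanSpace ℝ (Fin d) → ℝ)
    (p : EuclideanSpace ℝ (Fin d)) : Set (EuclideanSpace ℝ (Fin d)) :=
  {x | ∀ q ∈ P, ‖x - p‖ ^ 2 - ω p ^ 2 ≤ ‖x - q‖ ^ 2 - ω q ^ 2}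

/-- Weighted Voronoi face of a simplex `σ`. -/
def vorFace {d : ℕ} (P : Finset (EuclideanSpace ℝ (Fin d))) (ω : EuclideanSpace ℝ (Fin d) → ℝ)
    (σ : Finset (EuclideanSpace ℝ (Fin d))) : Set (EuclideanSpace ℝ (Fin d)) :=
  ⋂ p ∈ σ, vorCell P ω p

/-- `σ` is `δ²`-power protected at `c`. -/
def powerProtectedAt {d : ℕ} (P : Finset (EuclideanSpace ℝ (Fin d)))
    (ω : EuclideanSpace ℝ (Fin d) → ℝ) (σ : Finset (EuclideanSpace ℝ (Fin d)))
    (c : EuclideanSpace ℝ (Fin d)) (δsq : ℝ) : Prop :=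
  ∀ q ∈ P, q ∉ σ → ∀ p ∈ σ, ‖p - c‖ ^ 2 - ω p ^ 2 + δsq < ‖q - c‖ ^ 2 - ω q ^ 2

open Set Filter Topology Module

section AffineIndependent

variable {k V P : Type*} [DivisionRing k] [AddCommGroup V] [Module k V] [AddTorsor V P]

theorem exists_affineIndependent_of_mem_of_vectorSpan_eq_top {s : Set P} {p : P} (hp : p ∈ s)
    (hs : vectorSpan k s = ⊤) :
    ∃ t ⊆ s, p ∈ t ∧ AffineIndependent k ((↑) : t → P) ∧ affineSpan k t = ⊤ := by
  obtain ⟨b, hbs, hbspan, hbind⟩ := exists_linearIndependent k ((· -ᵥ p) '' s)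
  have hb0 : ∀ v ∈ b, v ≠ 0 := fun v hv => hbind.ne_zero ⟨v, hv⟩
  refine ⟨{p} ∪ (· +ᵥ p) '' b, ?_, by simp,
    (linearIndependent_set_iff_affineIndependent_vadd_union_singleton k hb0 p).1 hbind,
    affineSpan_singleton_union_vadd_eq_top_of_span_eq_top p ?_⟩
  · refine union_subset (singleton_subset_iff.2 hp) ?_
    rintro _ ⟨v, hv, rfl⟩
    obtain ⟨q, hq, rfl⟩ := hbs hv
    simpa using hq
  · rw [Subtype.range_coe, hbspan, ← vectorSpan_eq_span_vsub_set_right k hp, hs]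

theorem Finset.exists_subset_affineIndependent_card_eq [FiniteDimensional k V] {s : Finset P}
    {p : P} (hp : p ∈ s) (hs : vectorSpan k (s : Set P) = ⊤) :
    ∃ t ⊆ s, p ∈ t ∧ AffineIndependent k ((↑) : t → P) ∧ affineSpan k (t : Set P) = ⊤ ∧
      t.card = finrank k V + 1 := by
  obtain ⟨t, hts, hpt, hind, hspan⟩ := exists_affineIndependent_of_mem_of_vectorSpan_eq_top hp hs
  lift t to Finset P using s.finite_toSet.subset hts
  refine ⟨t, by exact_mod_cast hts, hpt, hind, hspan, ?_⟩
  have := hind.affineSpan_eq_top_iff_card_eq_finrank_add_one.1 (by rwa [Subtype.range_coe])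
  simpa using this

end AffineIndependent

theorem eq_zero_of_mem_extremePoints {E : Type*} [AddCommGroup E] [Module ℝ E] {K : Set E}
    {c v : E} (hc : c ∈ K.extremePoints ℝ) (h : ∀ᶠ s in 𝓝 (0 : ℝ), c + s • v ∈ K) : v = 0 := by
  obtain ⟨ε, hε, hball⟩ := Metric.eventually_nhds_iff.1 h
  have hε2 : 0 < ε / 2 := half_pos hε
  have hmem : ∀ s : ℝ, |s| = ε / 2 → c + s • v ∈ K := fun s hs =>
    hball (by rw [Real.dist_eq, sub_zero, hs]; exact half_lt_self hε)
  have hseg : c ∈ openSegment ℝ (c + (ε / 2) • v) (c + (-(ε / 2)) • v) :=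
    ⟨1 / 2, 1 / 2, by norm_num, by norm_num, by norm_num, by module⟩
  have hleft := hc.2 (hmem _ (abs_of_pos hε2)) (hmem _ (by rw [abs_neg, abs_of_pos hε2])) hseg
  simpa [hε.ne'] using hleft

theorem mem_orthogonal_vectorSpan_iff {E : Type*} [NormedAddCommGroup E] [InnerProductSpace ℝ E]
    {s : Set E} {v : E} : v ∈ (vectorSpan ℝ s)ᗮ ↔ ∀ q ∈ s, ∀ r ∈ s, inner ℝ v (q - r) = 0 := by
  rw [vectorSpan_def, ← Submodule.span_singleton_le_iff_mem, ← Submodule.isOrtho_iff_le,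
    Submodule.isOrtho_span]
  refine ⟨fun h q hq r hr => h rfl (Set.vsub_mem_vsub hq hr), ?_⟩
  rintro h _ rfl _ ⟨q, hq, r, hr, rfl⟩
  exact h q hq r hr

section PowerDistance

variable {E : Type*} [NormedAddCommGroup E]

def powerDist (ω : E → ℝ) (q x : E) : ℝ := ‖x - q‖ ^ 2 - ω q ^ 2

theorem continuous_powerDist (ω : E → ℝ) (q : E) : Continuous (powerDist ω q) := by
  unfold powerDist
  fun_prop

variable [InnerProductSpace ℝ E]

theorem powerDist_sub_powerDist (ω : E → ℝ) (q r x y : E) :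
    powerDist ω q y - powerDist ω r y =
      powerDist ω q x - powerDist ω r x - 2 * inner ℝ (y - x) (q - r) := by
  simp only [powerDist, norm_sub_sq_real, inner_sub_left, inner_sub_right, real_inner_comm]
  ring

end PowerDistance

section Voronoi

variable {d : ℕ} {P σ t : Finset (EuclideanSpace ℝ (Fin d))}
  {ω : EuclideanSpace ℝ (Fin d) → ℝ} {c x y p q r : EuclideanSpace ℝ (Fin d)}

theorem mem_vorCell_iff : x ∈ vorCell P ω p ↔ ∀ q ∈ P, powerDist ω p x ≤ powerDist ω q x :=
  Iff.rfl

theorem vorFace_subset_vorCell (hp : p ∈ σ) : vorFace P ω σ ⊆ vorCell P ω p :=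
  biInter_subset_of_mem hp

theorem isClosed_vorCell : IsClosed (vorCell P ω p) := by
  simp only [vorCell, ofPred_forall]
  exact isClosed_iInter fun _ => isClosed_iInter fun _ => isClosed_le (by fun_prop) (by fun_prop)

theorem isClosed_vorFace : IsClosed (vorFace P ω σ) :=
  isClosed_biInter fun _ _ => isClosed_vorCell

theorem isCompact_vorFace (hbdd : Bornology.IsBounded (vorCell P ω p)) (hp : p ∈ σ) :
    IsCompact (vorFace P ω σ) :=
  Metric.isCompact_of_isClosed_isBounded isClosed_vorFace (hbdd.subset (vorFace_subset_vorCell hp))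

theorem powerDist_eq_of_mem_vorCell (hq : q ∈ P) (hr : r ∈ P) (hxq : x ∈ vorCell P ω q)
    (hxr : x ∈ vorCell P ω r) : powerDist ω q x = powerDist ω r x :=
  le_antisymm (hxq r hr) (hxr q hq)

open Classical in
/-- The simplex of `Del_ω(P)` dual to the smallest face of the power diagram containing `c`. -/
def delaunaySimplexAt (P : Finset (EuclideanSpace ℝ (Fin d))) (ω : EuclideanSpace ℝ (Fin d) → ℝ)
    (c : EuclideanSpace ℝ (Fin d)) : Finset (EuclideanSpace ℝ (Fin d)) :=
  P.filter (c ∈ vorCell P ω ·)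

theorem mem_delaunaySimplexAt : q ∈ delaunaySimplexAt P ω c ↔ q ∈ P ∧ c ∈ vorCell P ω q := by
  simp [delaunaySimplexAt]

theorem delaunaySimplexAt_subset : delaunaySimplexAt P ω c ⊆ P :=
  fun _ hq => (mem_delaunaySimplexAt.1 hq).1

theorem subset_delaunaySimplexAt_iff (hσ : σ ⊆ P) :
    σ ⊆ delaunaySimplexAt P ω c ↔ c ∈ vorFace P ω σ := by
  simp only [Finset.subset_iff, mem_delaunaySimplexAt, vorFace, mem_iInter₂]
  exact ⟨fun h q hq => (h hq).2, fun h q hq => ⟨hσ hq, h q hq⟩⟩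

theorem powerDist_lt_of_notMem_delaunaySimplexAt (hr : r ∈ delaunaySimplexAt P ω c) (hq : q ∈ P)
    (hqc : q ∉ delaunaySimplexAt P ω c) : powerDist ω r c < powerDist ω q c := by
  have hcq : c ∉ vorCell P ω q := fun h => hqc (mem_delaunaySimplexAt.2 ⟨hq, h⟩)
  obtain ⟨q', hq', hlt⟩ := by simpa [mem_vorCell_iff] using hcq
  exact ((mem_delaunaySimplexAt.1 hr).2 q' hq').trans_lt hlt

theorem eventually_mem_vorFace (hσ : σ ⊆ P) (hc : c ∈ vorFace P ω σ) :
    ∀ᶠ x in 𝓝 c,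
      x - c ∈ (vectorSpan ℝ (↑(delaunaySimplexAt P ω c) : Set (EuclideanSpace ℝ (Fin d))))ᗮ →
        x ∈ vorFace P ω σ := by
  set τ := delaunaySimplexAt P ω c
  have hστ : σ ⊆ τ := (subset_delaunaySimplexAt_iff hσ).2 hc
  have hlt : ∀ᶠ x in 𝓝 c, ∀ r ∈ τ, ∀ q ∈ P, q ∉ τ → powerDist ω r x < powerDist ω q x := by
    refine (eventually_all_finset _).2 fun r hr => (eventually_all_finset _).2 fun q hq => ?_
    by_cases hqτ : q ∈ τ
    · exact .of_forall fun _ h => absurd hqτ h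
    · exact ((continuous_powerDist ω r).continuousAt.eventually_lt
        (continuous_powerDist ω q).continuousAt
        (powerDist_lt_of_notMem_delaunaySimplexAt hr hq hqτ)).mono fun _ h _ => h
  filter_upwards [hlt] with x hx hperp
  refine mem_iInter₂.2 fun r hr q hq => ?_
  by_cases hqτ : q ∈ τ
  · obtain ⟨hrP, hcr⟩ := mem_delaunaySimplexAt.1 (hστ hr)
    obtain ⟨-, hcq⟩ := mem_delaunaySimplexAt.1 hqτ
    have htie := powerDist_eq_of_mem_vorCell hrP hq hcr hcq
    have hinner := mem_orthogonal_vectorSpan_iff.1 hperp r (hστ hr) q hqτ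
    have := powerDist_sub_powerDist ω r q c x
    show powerDist ω r x ≤ powerDist ω q x
    linarith
  · exact (hx r (hστ hr) q hq hqτ).le

theorem vectorSpan_delaunaySimplexAt_eq_top (hσ : σ ⊆ P)
    (hc : c ∈ (vorFace P ω σ).extremePoints ℝ) :
    vectorSpan ℝ (↑(delaunaySimplexAt P ω c) : Set (EuclideanSpace ℝ (Fin d))) = ⊤ := by
  rw [← Submodule.orthogonal_eq_bot_iff, Submodule.eq_bot_iff]
  intro v hv
  refine eq_zero_of_mem_extremePoints hc ?_
  have hline : Tendsto (fun s : ℝ => c + s • v) (𝓝 0) (𝓝 c) := by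
    simpa using (Continuous.tendsto (by fun_prop) 0 : Tendsto (fun s : ℝ => c + s • v) _ _)
  filter_upwards [hline.eventually (eventually_mem_vorFace hσ hc.1)] with s hs
  exact hs (by simpa using Submodule.smul_mem _ s hv)

theorem eq_of_mem_vorFace_of_affineSpan_eq_top (htP : t ⊆ P)
    (ht : affineSpan ℝ (t : Set (EuclideanSpace ℝ (Fin d))) = ⊤) (hx : x ∈ vorFace P ω t)
    (hy : y ∈ vorFace P ω t) : x = y := by
  have hperp : y - x ∈ (vectorSpan ℝ (t : Set (EuclideanSpace ℝ (Fin d))))ᗮ := by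
    refine mem_orthogonal_vectorSpan_iff.2 fun q hq r hr => ?_
    have hxqr := powerDist_eq_of_mem_vorCell (htP hq) (htP hr) (vorFace_subset_vorCell hq hx)
      (vorFace_subset_vorCell hr hx)
    have hyqr := powerDist_eq_of_mem_vorCell (htP hq) (htP hr) (vorFace_subset_vorCell hq hy)
      (vorFace_subset_vorCell hr hy)
    have := powerDist_sub_powerDist ω q r x y
    linarith
  rw [AffineSubspace.vectorSpan_eq_top_of_affineSpan_eq_top ℝ _ _ ht,
    Submodule.top_orthogonal_eq_bot, Submodule.mem_bot, sub_eq_zero] at hperp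
  exact hperp.symm

theorem delaunaySimplexAt_subset_of_powerProtectedAt {δsq : ℝ}
    (hprot : powerProtectedAt P ω t c δsq) (hδsq : 0 ≤ δsq) (hpt : p ∈ t) (hpP : p ∈ P) :
    delaunaySimplexAt P ω c ⊆ t := by
  intro q hq
  obtain ⟨hqP, hcq⟩ := mem_delaunaySimplexAt.1 hq
  by_contra hqt
  have hprot_q := hprot q hqP hqt p hpt
  have hq_min := hcq p hpP
  rw [norm_sub_rev p c, norm_sub_rev q c] at hprot_q
  linarith

end Voronoi

theorem no_degenerate_simplices_general
    (d : ℕ) (P : Finset (EuclideanSpace ℝ (Fin d)))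
    (ω : EuclideanSpace ℝ (Fin d) → ℝ)
    (p : EuclideanSpace ℝ (Fin d)) (hp : p ∈ P)
    (hbdd : Bornology.IsBounded (vorCell P ω p))
    (δ : ℝ)
    (hprot : ∀ σ : Finset (EuclideanSpace ℝ (Fin d)), σ ⊆ P → p ∈ σ → σ.card = d + 1 →
      (vorFace P ω σ).Nonempty → ∃ c ∈ vorFace P ω σ, powerProtectedAt P ω σ c (δ ^ 2)) :
    ∀ σ : Finset (EuclideanSpace ℝ (Fin d)), σ ⊆ P → p ∈ σ → (vorFace P ω σ).Nonempty →
      AffineIndependent ℝ ((↑) : {x // x ∈ σ} → EuclideanSpace ℝ (Fin d)) := by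
  intro σ hσP hpσ hne
  obtain ⟨c, hc⟩ := (isCompact_vorFace hbdd hpσ).extremePoints_nonempty hne
  have hστ : σ ⊆ delaunaySimplexAt P ω c := (subset_delaunaySimplexAt_iff hσP).2 hc.1
  obtain ⟨t, htτ, hpt, ht_indep, ht_span, ht_card⟩ :=
    Finset.exists_subset_affineIndependent_card_eq (hστ hpσ)
      (vectorSpan_delaunaySimplexAt_eq_top hσP hc)
  have htP : t ⊆ P := htτ.trans delaunaySimplexAt_subset
  have hct : c ∈ vorFace P ω t := (subset_delaunaySimplexAt_iff htP).1 htτ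
  obtain ⟨c', hc't, hprot_t⟩ :=
    hprot t htP hpt (by rw [ht_card, finrank_euclideanSpace_fin]) ⟨c, hct⟩
  obtain rfl : c' = c := eq_of_mem_vorFace_of_affineSpan_eq_top htP ht_span hc't hct
  have hτt := delaunaySimplexAt_subset_of_powerProtectedAt hprot_t (sq_nonneg δ) hpt hp
  exact ht_indep.mono (Finset.coe_subset.2 (hστ.trans hτt))

/-- No degeneracies: if `Vor_ω(p)` is bounded and all `d`-simplices of `Del_ω(P)` incident
to `p` are `δ²`-power protected, then every simplex of `Del_ω(P)` containing `p` has
affinely independent vertices. -/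
theorem no_degenerate_simplices
    (d : ℕ) (P : Finset (EuclideanSpace ℝ (Fin d)))
    (ω : EuclideanSpace ℝ (Fin d) → ℝ) (hω : ∀ q ∈ P, 0 ≤ ω q)
    (p : EuclideanSpace ℝ (Fin d)) (hp : p ∈ P)
    (hbdd : Bornology.IsBounded (vorCell P ω p))
    (δ : ℝ) (hδ : 0 < δ)
    (hprot : ∀ σ : Finset (EuclideanSpace ℝ (Fin d)), σ ⊆ P → p ∈ σ → σ.card = d + 1 →
      (vorFace P ω σ).Nonempty → ∃ c ∈ vorFace P ω σ, powerProtectedAt P ω σ c (δ ^ 2)) :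
    ∀ σ : Finset (EuclideanSpace ℝ (Fin d)), σ ⊆ P → p ∈ σ → (vorFace P ω σ).Nonempty →
      AffineIndependent ℝ ((↑) : {x // x ∈ σ} → EuclideanSpace ℝ (Fin d)) :=
  no_degenerate_simplices_general d P ω p hp hbdd δ hprot
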